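/- Let μ, r ∈ ℝ and σ > 0 satisfy 0 < μ − r < σ². For u > 0 and z, x ∈ (0,1), let p(u,z,x) := exp( −(1/(2σ²u))·( (r − μ + σ²/2)·u + ln( z(1−x)/((1−z)x) ) )² ) / ( σ·z·(1−z)·√(2πu) ). Then for all u > 0 and all x ∈ (0,1), ∫_0^1 ( (1−z)·z·| r − μ + (2x − 1/2)·σ² + (1/u)·ln( z(1−x)/((1−z)x) ) |·p(u,z,x) ) / ( (1−x)²·x²·σ² ) dz ≤ ( 2√2 / ( (1−x)³·x ) )·( 1 + 1/( σ·√(πu) ) )·e^{4σ²u}. -/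

import Mathlib

open Set MeasureTheory

lemma abs_mul_gauss_le {s : ℝ} (hs : 0 < s) (t : ℝ) :
    |t| * Real.exp (-(1/(2*s^2))*t^2) ≤ s * Real.exp (-(1/(4*s^2))*t^2) := by
  have h1 : |t| ≤ s * Real.exp ((1/(4*s^2))*t^2) := by
    have h2 := Real.add_one_le_exp ((1/(4*s^2))*t^2)
    have hy : 4*s^2*((1/(4*s^2))*t^2) = t^2 := by field_simp
    nlinarith [sq_nonneg (2*s - |t|), abs_nonneg t, sq_abs t, Real.exp_pos ((1/(4*s^2))*t^2)]
  calc |t| * Real.exp (-(1/(2*s^2))*t^2)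
      ≤ (s * Real.exp ((1/(4*s^2))*t^2)) * Real.exp (-(1/(2*s^2))*t^2) :=
        mul_le_mul_of_nonneg_right h1 (Real.exp_nonneg _)
    _ = s * Real.exp (-(1/(4*s^2))*t^2) := by
        rw [mul_assoc, ← Real.exp_add]; congr 1; field_simp; ring

/-- The transition density `p(u,z,x)` of the uncontrolled wealth-fraction process. -/
noncomputable def wealthFracDensity (μ r σ u z x : ℝ) : ℝ :=
  Real.exp (-(1 / (2 * σ^2 * u)) *
      ((r - μ + σ^2 / 2) * u + Real.log (z * (1 - x) / ((1 - z) * x)))^2)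
    / (σ * z * (1 - z) * Real.sqrt (2 * Real.pi * u))

set_option maxHeartbeats 2000000 in
/-- The key integral estimate (inequality (B.12)) used for the convergence of `v_xx^ε`
as `ε ↓ 0`: under `0 < μ − r < σ²`, for all `u > 0` and `x ∈ (0,1)`,
`∫_0^1 |∂/∂x (z(1−z) p(u,z,x)/(x(1−x)))| dz
  ≤ (2√2/((1−x)³x)) (1 + 1/(σ√(πu))) e^{4σ²u}`. -/
theorem density_x_derivative_integral_bound (μ r σ : ℝ) (hσ : 0 < σ)
    (hmerton₀ : 0 < μ - r) (hmerton₁ : μ - r < σ^2) :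
    ∀ u : ℝ, 0 < u → ∀ x ∈ Ioo (0:ℝ) 1,
      (∫ z in Ioo (0:ℝ) 1,
          (1 - z) * z *
              |r - μ + (2 * x - 1/2) * σ^2 + (1/u) * Real.log (z * (1 - x) / ((1 - z) * x))| *
              wealthFracDensity μ r σ u z x
            / ((1 - x)^2 * x^2 * σ^2))
        ≤ (2 * Real.sqrt 2 / ((1 - x)^3 * x)) * (1 + 1 / (σ * Real.sqrt (Real.pi * u)))
            * Real.exp (4 * σ^2 * u) := by
  intro u hu x hx
  obtain ⟨hx0, hx1⟩ := hx
  have hx1' : (0:ℝ) < 1 - x := by linarith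
  have hσ2 : (0:ℝ) < σ^2 := by positivity
  have hπ : (0:ℝ) < Real.pi := Real.pi_pos
  have hQ : (0:ℝ) < Real.sqrt u := Real.sqrt_pos.mpr hu
  have hP : (0:ℝ) < Real.sqrt Real.pi := Real.sqrt_pos.mpr hπ
  have hR2 : (0:ℝ) < Real.sqrt 2 := Real.sqrt_pos.mpr (by norm_num)
  have hPQ : (0:ℝ) < Real.sqrt (Real.pi * u) := Real.sqrt_pos.mpr (by positivity)
  have h2πu : (0:ℝ) < Real.sqrt (2 * Real.pi * u) := Real.sqrt_pos.mpr (by positivity)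
  set a : ℝ := r - μ + σ^2/2 with ha
  set b : ℝ := r - μ + (2*x - 1/2) * σ^2 with hb
  set m : ℝ := (σ^2 - a) * u with hm
  set D : ℝ := (1-x)^2 * x^2 * σ^2 * (σ * Real.sqrt (2*Real.pi*u)) with hD
  have hD0 : (0:ℝ) < D := by rw [hD]; positivity
  set C : ℝ := x / ((1-x) * D) * Real.exp ((μ - r) * u) with hC
  have hC0 : (0:ℝ) < C := by rw [hC]; positivity
  set f : ℝ → ℝ := fun z => Real.log (z * (1-x) / ((1-z) * x)) with hf
  set f' : ℝ → ℝ := fun z => 1 / (z * (1-z)) with hf'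
  set H : ℝ → ℝ := fun w => C * (2*σ^2) * Real.exp (-(1/(2*σ^2*u)) * (w - m)^2)
      + C * (σ / Real.sqrt u) * Real.exp (-(1/(4*σ^2*u)) * (w - m)^2) with hH
  -- derivative of f on Ioo
  have key : ∀ w ∈ Ioo (0:ℝ) 1, f w = Real.log w - Real.log (1-w) + Real.log ((1-x)/x) := by
    intro w hw
    obtain ⟨hw0, hw1⟩ := hw
    have hw1' : (0:ℝ) < 1 - w := by linarith
    rw [hf]
    simp only
    rw [show w * (1-x) / ((1-w)*x) = (w / (1-w)) * ((1-x)/x) by field_simp]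
    rw [Real.log_mul (by positivity) (by positivity), Real.log_div (by positivity) (by positivity)]
  have hderiv : ∀ z ∈ Ioo (0:ℝ) 1, HasDerivAt f (f' z) z := by
    intro z hz
    obtain ⟨hz0, hz1⟩ := hz
    have hz1' : (0:ℝ) < 1 - z := by linarith
    have d1 : HasDerivAt (fun w : ℝ => Real.log w) z⁻¹ z := Real.hasDerivAt_log (ne_of_gt hz0)
    have d2i : HasDerivAt (fun w : ℝ => 1 - w) (-1) z := (hasDerivAt_id z).const_sub 1
    have d2 : HasDerivAt (fun w : ℝ => Real.log (1-w)) ((1-z)⁻¹ * (-1)) z :=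
      (Real.hasDerivAt_log (ne_of_gt hz1')).comp z d2i
    have d3 : HasDerivAt (fun w : ℝ => Real.log w - Real.log (1-w) + Real.log ((1-x)/x))
        (z⁻¹ - (1-z)⁻¹ * (-1)) z := (d1.sub d2).add_const _
    have heq : f =ᶠ[nhds z] (fun w : ℝ => Real.log w - Real.log (1-w) + Real.log ((1-x)/x)) :=
      Filter.eventuallyEq_of_mem (isOpen_Ioo.mem_nhds ⟨hz0, hz1⟩) key
    have hcongr := d3.congr_of_eventuallyEq heq
    refine hcongr.congr_deriv ?_
    rw [hf']
    simp only
    field_simp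
    ring
  have hderiv' : ∀ z ∈ Ioo (0:ℝ) 1, HasDerivWithinAt f (f' z) (Ioo (0:ℝ) 1) z :=
    fun z hz => (hderiv z hz).hasDerivWithinAt
  -- injectivity
  have hinj : InjOn f (Ioo (0:ℝ) 1) := by
    apply StrictMonoOn.injOn
    intro z1 h1 z2 h2 hlt
    rw [key z1 h1, key z2 h2]
    have l1 : Real.log z1 < Real.log z2 := Real.log_lt_log h1.1 hlt
    have l2 : Real.log (1-z2) < Real.log (1-z1) :=
      Real.log_lt_log (by linarith [h2.2]) (by linarith)
    linarith
  -- image is univ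
  have himg : f '' Ioo (0:ℝ) 1 = univ := by
    apply eq_univ_of_forall
    intro w
    set t : ℝ := Real.exp w * x / (1-x) with ht
    have ht0 : (0:ℝ) < t := by positivity
    have h1t : (0:ℝ) < 1 + t := by linarith
    refine ⟨t/(1+t), ⟨by positivity, by rw [div_lt_one h1t]; linarith⟩, ?_⟩
    rw [hf]
    simp only
    have he : t/(1+t) * (1-x) / ((1 - t/(1+t)) * x) = Real.exp w := by
      rw [ht]
      field_simp
      ring_nf
      field_simp
      ring
    rw [he, Real.log_exp]
  -- H is integrable
  have gi1 : Integrable (fun w : ℝ => Real.exp (-(1/(2*σ^2*u)) * (w - m)^2)) := by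
    have := (integrable_exp_neg_mul_sq (show (0:ℝ) < 1/(2*σ^2*u) by positivity)).comp_sub_right m
    simpa using this
  have gi2 : Integrable (fun w : ℝ => Real.exp (-(1/(4*σ^2*u)) * (w - m)^2)) := by
    have := (integrable_exp_neg_mul_sq (show (0:ℝ) < 1/(4*σ^2*u) by positivity)).comp_sub_right m
    simpa using this
  have hHint : Integrable H := by
    rw [hH]
    exact (gi1.const_mul _).add (gi2.const_mul _)
  -- pointwise bound
  have hpoint : ∀ z ∈ Ioo (0:ℝ) 1,
      (1 - z) * z *
          |b + (1/u) * Real.log (z * (1 - x) / ((1 - z) * x))| *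
          wealthFracDensity μ r σ u z x / ((1 - x)^2 * x^2 * σ^2)
        ≤ |f' z| • H (f z) := by
    intro z hz
    obtain ⟨hz0, hz1⟩ := hz
    have hz1' : (0:ℝ) < 1 - z := by linarith
    have hzne : z ≠ 0 := ne_of_gt hz0
    have hz1ne : (1:ℝ) - z ≠ 0 := ne_of_gt hz1'
    have hxne : x ≠ 0 := ne_of_gt hx0
    have hx1ne : (1:ℝ) - x ≠ 0 := ne_of_gt hx1'
    have hσne : σ ≠ 0 := ne_of_gt hσ
    have hune : u ≠ 0 := ne_of_gt hu
    have hsne : Real.sqrt (2*Real.pi*u) ≠ 0 := ne_of_gt h2πu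
    have hQne : Real.sqrt u ≠ 0 := ne_of_gt hQ
    have hDne : D ≠ 0 := ne_of_gt hD0
    have hfz : f z = Real.log (z * (1-x) / ((1-z)*x)) := rfl
    have hew : Real.exp (f z) = z * (1-x) / ((1-z)*x) := by
      rw [hfz]; exact Real.exp_log (by positivity)
    have hf'z : f' z = 1/(z*(1-z)) := rfl
    rw [smul_eq_mul, hf'z, abs_of_pos (by positivity : (0:ℝ) < 1/(z*(1-z)))]
    have eLHS : (1 - z) * z * |b + (1/u) * Real.log (z * (1 - x) / ((1 - z) * x))| *
          wealthFracDensity μ r σ u z x / ((1 - x)^2 * x^2 * σ^2)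
        = |b + (1/u) * f z| * Real.exp (-(1/(2*σ^2*u)) * (a*u + f z)^2) / D := by
      simp only [wealthFracDensity, hf, hD, ha]
      field_simp
    rw [eLHS]
    -- the key bound as a function of an arbitrary real v
    have hkey2 : ∀ v : ℝ, (x/((1-x)*D)) * Real.exp v *
        (|b + (1/u) * v| * Real.exp (-(1/(2*σ^2*u)) * (a*u + v)^2)) ≤ H v := by
      intro v
      have hexpid : v + (-(1/(2*σ^2*u)) * (a*u + v)^2)
          = (μ - r)*u + (-(1/(2*σ^2*u)) * (v - m)^2) := by
        rw [hm, ha]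
        field_simp
        ring
      have hsplit : (x/((1-x)*D)) * Real.exp v * Real.exp (-(1/(2*σ^2*u)) * (a*u + v)^2)
          = C * Real.exp (-(1/(2*σ^2*u)) * (v - m)^2) := by
        rw [hC, mul_assoc, ← Real.exp_add, hexpid, Real.exp_add]
        ring
      have hre : (x/((1-x)*D)) * Real.exp v *
          (|b + (1/u) * v| * Real.exp (-(1/(2*σ^2*u)) * (a*u + v)^2))
          = C * Real.exp (-(1/(2*σ^2*u)) * (v - m)^2) * |b + (1/u) * v| := by
        rw [← hsplit]; ring
      rw [hre]
      have hAb : |b + (1/u)*v| ≤ 2*σ^2 + (1/u)*|v - m| := by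
        have hbm : b + (1/u)*v = 2*x*σ^2 + (1/u)*(v-m) := by
          rw [hb, hm, ha]; field_simp; ring
        rw [hbm]
        calc |2*x*σ^2 + (1/u)*(v-m)| ≤ |2*x*σ^2| + |(1/u)*(v-m)| := abs_add_le _ _
          _ = 2*x*σ^2 + (1/u)*|v-m| := by
              rw [abs_of_nonneg (by positivity), abs_mul,
                abs_of_nonneg (by positivity : (0:ℝ) ≤ 1/u)]
          _ ≤ 2*σ^2 + (1/u)*|v-m| := by nlinarith
      have hgauss : |v - m| * Real.exp (-(1/(2*σ^2*u)) * (v-m)^2)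
          ≤ (σ*Real.sqrt u) * Real.exp (-(1/(4*σ^2*u)) * (v-m)^2) := by
        have hs : (0:ℝ) < σ * Real.sqrt u := by positivity
        have h := abs_mul_gauss_le hs (v - m)
        rw [show (σ*Real.sqrt u)^2 = σ^2*u by
          rw [mul_pow, Real.sq_sqrt hu.le]] at h
        rw [show (2:ℝ)*(σ^2*u) = 2*σ^2*u by ring,
          show (4:ℝ)*(σ^2*u) = 4*σ^2*u by ring] at h
        exact h
      have hsu : σ*Real.sqrt u/u = σ/Real.sqrt u := by
        rw [div_eq_div_iff (by positivity) (by positivity), mul_assoc,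
          Real.mul_self_sqrt hu.le]
      calc C * Real.exp (-(1/(2*σ^2*u)) * (v - m)^2) * |b + (1/u) * v|
          ≤ C * Real.exp (-(1/(2*σ^2*u)) * (v - m)^2) * (2*σ^2 + (1/u)*|v - m|) :=
            mul_le_mul_of_nonneg_left hAb (by positivity)
        _ = C*(2*σ^2)*Real.exp (-(1/(2*σ^2*u)) * (v - m)^2)
            + (C/u) * (|v-m| * Real.exp (-(1/(2*σ^2*u)) * (v-m)^2)) := by ring
        _ ≤ C*(2*σ^2)*Real.exp (-(1/(2*σ^2*u)) * (v - m)^2)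
            + (C/u) * ((σ*Real.sqrt u) * Real.exp (-(1/(4*σ^2*u)) * (v-m)^2)) := by
            have := mul_le_mul_of_nonneg_left hgauss (le_of_lt (by positivity : (0:ℝ) < C/u))
            linarith
        _ = H v := by
            simp only [hH]
            rw [show C/u*((σ*Real.sqrt u) * Real.exp (-(1/(4*σ^2*u)) * (v-m)^2))
              = C*(σ*Real.sqrt u/u) * Real.exp (-(1/(4*σ^2*u)) * (v-m)^2) by ring, hsu]
    have hre2 : (1/(z*(1-z))) * ((x/((1-x)*D)) * Real.exp (f z) *
        (|b + (1/u) * f z| * Real.exp (-(1/(2*σ^2*u)) * (a*u + f z)^2)))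
        = |b + (1/u) * f z| * Real.exp (-(1/(2*σ^2*u)) * (a*u + f z)^2) / ((1-z)^2 * D) := by
      rw [hew]; field_simp
    have hkey1 : |b + (1/u) * f z| * Real.exp (-(1/(2*σ^2*u)) * (a*u + f z)^2) / D
        ≤ (1/(z*(1-z))) * ((x/((1-x)*D)) * Real.exp (f z) *
          (|b + (1/u) * f z| * Real.exp (-(1/(2*σ^2*u)) * (a*u + f z)^2))) := by
      rw [hre2]
      have hden : (1-z)^2*D ≤ D := by
        have h1 : (1-z)^2 ≤ 1 := by nlinarith
        nlinarith [mul_le_mul_of_nonneg_right h1 hD0.le]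
      exact div_le_div_of_nonneg_left (by positivity) (by positivity) hden
    exact le_trans hkey1 (mul_le_mul_of_nonneg_left (hkey2 (f z)) (by positivity))
  -- step 1 : integral ≤ ∫ z in Ioo, |f' z| • H (f z)
  have hstep1 : (∫ z in Ioo (0:ℝ) 1,
          (1 - z) * z *
              |b + (1/u) * Real.log (z * (1 - x) / ((1 - z) * x))| *
              wealthFracDensity μ r σ u z x / ((1 - x)^2 * x^2 * σ^2))
        ≤ ∫ z in Ioo (0:ℝ) 1, |f' z| • H (f z) := by
    have hint : IntegrableOn (fun z => |f' z| • H (f z)) (Ioo (0:ℝ) 1) := by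
      rw [← integrableOn_image_iff_integrableOn_abs_deriv_smul measurableSet_Ioo hderiv' hinj H,
        himg]
      exact integrableOn_univ.mpr hHint
    apply integral_mono_of_nonneg
    · filter_upwards [ae_restrict_mem measurableSet_Ioo] with z hz
      obtain ⟨hz0, hz1⟩ := hz
      have hz1' : (0:ℝ) < 1 - z := by linarith
      have hp : 0 ≤ wealthFracDensity μ r σ u z x := by
        unfold wealthFracDensity
        positivity
      positivity
    · exact hint
    · filter_upwards [ae_restrict_mem measurableSet_Ioo] with z hz
      exact hpoint z hz
  -- step 2 : change of variables
  have hstep2 : (∫ z in Ioo (0:ℝ) 1, |f' z| • H (f z)) = ∫ w, H w := by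
    rw [← integral_image_eq_integral_abs_deriv_smul measurableSet_Ioo hderiv' hinj H, himg,
      Measure.restrict_univ]
  -- value of ∫ H
  have hHval : (∫ w, H w) = C * (2*σ^2) * (Real.sqrt 2 * σ * Real.sqrt (Real.pi * u))
      + C * (σ / Real.sqrt u) * (2 * σ * Real.sqrt (Real.pi * u)) := by
    have e1 : Real.sqrt (Real.pi / (1/(2*σ^2*u))) = Real.sqrt 2 * σ * Real.sqrt (Real.pi * u) := by
      rw [show Real.pi/(1/(2*σ^2*u)) = 2*σ^2*(Real.pi*u) by field_simp,
        show (2:ℝ)*σ^2*(Real.pi*u) = 2*σ^2*(Real.pi*u) from rfl]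
      rw [show (2:ℝ)*σ^2*(Real.pi*u) = (2*σ^2)*(Real.pi*u) by ring,
        Real.sqrt_mul (by positivity), Real.sqrt_mul (by norm_num : (0:ℝ) ≤ 2),
        Real.sqrt_sq hσ.le]
    have e2 : Real.sqrt (Real.pi / (1/(4*σ^2*u))) = 2 * σ * Real.sqrt (Real.pi * u) := by
      rw [show Real.pi/(1/(4*σ^2*u)) = (4*σ^2)*(Real.pi*u) by field_simp,
        Real.sqrt_mul (by positivity), Real.sqrt_mul (by norm_num : (0:ℝ) ≤ 4),
        Real.sqrt_sq hσ.le, show Real.sqrt 4 = 2 by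
          rw [show (4:ℝ) = 2^2 by norm_num, Real.sqrt_sq (by norm_num : (0:ℝ) ≤ 2)]]
    have t1 : (∫ w : ℝ, Real.exp (-(1/(2*σ^2*u)) * (w - m)^2))
        = Real.sqrt (Real.pi / (1/(2*σ^2*u))) := by
      rw [← integral_gaussian (1/(2*σ^2*u))]
      exact integral_sub_right_eq_self (fun t => Real.exp (-(1/(2*σ^2*u)) * t^2)) m
    have t2 : (∫ w : ℝ, Real.exp (-(1/(4*σ^2*u)) * (w - m)^2))
        = Real.sqrt (Real.pi / (1/(4*σ^2*u))) := by
      rw [← integral_gaussian (1/(4*σ^2*u))]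
      exact integral_sub_right_eq_self (fun t => Real.exp (-(1/(4*σ^2*u)) * t^2)) m
    rw [hH]
    rw [integral_add (gi1.const_mul _) (gi2.const_mul _), integral_const_mul,
      integral_const_mul, t1, t2, e1, e2]
  -- final comparison
  have hfinal : C * (2*σ^2) * (Real.sqrt 2 * σ * Real.sqrt (Real.pi * u))
      + C * (σ / Real.sqrt u) * (2 * σ * Real.sqrt (Real.pi * u))
      ≤ (2 * Real.sqrt 2 / ((1 - x)^3 * x)) * (1 + 1 / (σ * Real.sqrt (Real.pi * u)))
            * Real.exp (4 * σ^2 * u) := by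
    have hS2 : Real.sqrt (2*Real.pi*u) = Real.sqrt 2 * Real.sqrt (Real.pi*u) := by
      rw [mul_assoc, Real.sqrt_mul (by norm_num : (0:ℝ) ≤ 2)]
    have hSpq : Real.sqrt (Real.pi*u) = Real.sqrt Real.pi * Real.sqrt u :=
      Real.sqrt_mul hπ.le u
    have h4 : Real.sqrt 4 = 2 := by
      rw [show (4:ℝ) = 2^2 by norm_num, Real.sqrt_sq (by norm_num : (0:ℝ) ≤ 2)]
    have hP2 : Real.sqrt Real.pi ≤ 2 := by
      rw [← h4]; exact Real.sqrt_le_sqrt (by linarith [Real.pi_le_four])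
    have h1R : (1:ℝ) ≤ Real.sqrt 2 := by
      rw [show (1:ℝ) = Real.sqrt 1 by simp]
      exact Real.sqrt_le_sqrt (by norm_num)
    have hR2sq : Real.sqrt 2 * Real.sqrt 2 = 2 := Real.mul_self_sqrt (by norm_num)
    have hexp : Real.exp ((μ - r)*u) ≤ Real.exp (4*σ^2*u) := by
      apply Real.exp_le_exp.mpr
      nlinarith
    have hLeq : C * (2*σ^2) * (Real.sqrt 2 * σ * Real.sqrt (Real.pi * u))
        + C * (σ / Real.sqrt u) * (2 * σ * Real.sqrt (Real.pi * u))
        = (2/((1-x)^3*x)) * (1 + 1/(σ*(Real.sqrt 2 * Real.sqrt u))) * Real.exp ((μ - r)*u) := by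
      rw [hC, hD, hS2, hSpq]
      field_simp
    rw [hLeq]
    have hA : (2/((1-x)^3*x)) * (1 + 1/(σ*(Real.sqrt 2 * Real.sqrt u)))
        ≤ (2*Real.sqrt 2/((1-x)^3*x)) * (1 + 1/(σ*Real.sqrt (Real.pi*u))) := by
      have key : 1/(σ*(Real.sqrt 2 * Real.sqrt u)) ≤ Real.sqrt 2 * (1/(σ*Real.sqrt (Real.pi*u))) := by
        rw [hSpq, mul_one_div, div_le_div_iff₀ (by positivity) (by positivity)]
        have h22 : Real.sqrt 2*(σ*(Real.sqrt 2*Real.sqrt u)) = 2*(σ*Real.sqrt u) := by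
          rw [show Real.sqrt 2*(σ*(Real.sqrt 2*Real.sqrt u))
            = (Real.sqrt 2*Real.sqrt 2)*(σ*Real.sqrt u) by ring, hR2sq]
        nlinarith [mul_le_mul_of_nonneg_right hP2 (le_of_lt (mul_pos hσ hQ)), h22]
      have ht : (0:ℝ) ≤ 1/(σ*Real.sqrt (Real.pi*u)) := by positivity
      have hsc : 1 + 1/(σ*(Real.sqrt 2 * Real.sqrt u))
          ≤ Real.sqrt 2 * (1 + 1/(σ*Real.sqrt (Real.pi*u))) := by nlinarith
      calc (2/((1-x)^3*x)) * (1 + 1/(σ*(Real.sqrt 2 * Real.sqrt u)))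
          ≤ (2/((1-x)^3*x)) * (Real.sqrt 2 * (1 + 1/(σ*Real.sqrt (Real.pi*u)))) :=
            mul_le_mul_of_nonneg_left hsc (by positivity)
        _ = (2*Real.sqrt 2/((1-x)^3*x)) * (1 + 1/(σ*Real.sqrt (Real.pi*u))) := by ring
    exact mul_le_mul hA hexp (Real.exp_pos _).le (by positivity)
  calc _ ≤ ∫ z in Ioo (0:ℝ) 1, |f' z| • H (f z) := hstep1
    _ = ∫ w, H w := hstep2
    _ ≤ _ := by rw [hHval]; exact hfinal
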